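/- arXiv:1708.08059 — 8 statements merged into one kernel-verified Lean document; each statement's English description precedes it below -/
import Mathlib

section
/- Let H : ℝ^d × ℝ^d → ℝ be continuously differentiable, let S be a skew-symmetric 2d×2d real matrix, and suppose (p^{n+1}, q^{n+1}) satisfies the partitioned AVF update: (1/τ)((p^{n+1}-p^n), (q^{n+1}-q^n)) = S · (∫₀¹ H_p(ξp^{n+1}+(1-ξ)p^n, q^n) dξ, ∫₀¹ H_q(p^{n+1}, ξq^{n+1}+(1-ξ)q^n) dξ) with τ ≠ 0. Then H(p^{n+1}, q^{n+1}) = H(p^n, q^n). -/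
/-!
Split the energy difference along the broken path `(p₀, q₀) → (p₁, q₀) → (p₁, q₁)`. On each leg
the fundamental theorem of calculus writes the difference as the displacement dotted with the
averaged partial gradient, so `H (p₁, q₁) - H (p₀, q₀) = Δ ⬝ᵥ v`, where `Δ = (p₁ - p₀, q₁ - q₀)` and
`v` is the vector of averaged partial gradients in the update. The update says `Δ = τ • S *ᵥ v`,
and `v ⬝ᵥ S *ᵥ v = 0` because `S` is skew-symmetric.
-/
open MeasureTheory Matrix

theorem Matrix.dotProduct_mulVec_self_eq_zero_of_transpose_eq_neg {n R : Type*} [Fintype n]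
    [CommRing R] [IsAddTorsionFree R] {S : Matrix n n R} (hS : Sᵀ = -S) (v : n → R) :
    v ⬝ᵥ S *ᵥ v = 0 := by
  refine self_eq_neg.1 ?_
  calc v ⬝ᵥ S *ᵥ v = Sᵀ *ᵥ v ⬝ᵥ v := by rw [dotProduct_mulVec, mulVec_transpose]
    _ = -(v ⬝ᵥ S *ᵥ v) := by rw [hS, neg_mulVec, neg_dotProduct, dotProduct_comm]

theorem fderiv_prodMk_left_apply {𝕜 E F G : Type*} [NontriviallyNormedField 𝕜]
    [NormedAddCommGroup E] [NormedSpace 𝕜 E] [NormedAddCommGroup F] [NormedSpace 𝕜 F]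
    [NormedAddCommGroup G] [NormedSpace 𝕜 G] {f : E × F → G} {x : E} {y : F}
    (hf : DifferentiableAt 𝕜 f (x, y)) (u : E) :
    fderiv 𝕜 (fun x => f (x, y)) x u = fderiv 𝕜 f (x, y) (u, 0) :=
  DFunLike.congr_fun (hf.hasFDerivAt.comp x (hasFDerivAt_prodMk_left (𝕜 := 𝕜) x y)).fderiv u

theorem fderiv_prodMk_right_apply {𝕜 E F G : Type*} [NontriviallyNormedField 𝕜]
    [NormedAddCommGroup E] [NormedSpace 𝕜 E] [NormedAddCommGroup F] [NormedSpace 𝕜 F]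
    [NormedAddCommGroup G] [NormedSpace 𝕜 G] {f : E × F → G} {x : E} {y : F}
    (hf : DifferentiableAt 𝕜 f (x, y)) (u : F) :
    fderiv 𝕜 (fun y => f (x, y)) y u = fderiv 𝕜 f (x, y) (0, u) :=
  DFunLike.congr_fun (hf.hasFDerivAt.comp y (hasFDerivAt_prodMk_right (𝕜 := 𝕜) x y)).fderiv u

section Segment

variable {E F : Type*} [NormedAddCommGroup E] [NormedSpace ℝ E]
  [NormedAddCommGroup F] [NormedSpace ℝ F]

theorem ContDiff.continuous_fderiv_segment_apply {f : E → F} (hf : ContDiff ℝ 1 f)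
    (x₀ x₁ u : E) : Continuous fun ξ : ℝ => fderiv ℝ f (ξ • x₁ + (1 - ξ) • x₀) u :=
  ((hf.continuous_fderiv one_ne_zero).comp (by fun_prop)).clm_apply continuous_const

theorem ContDiff.sub_eq_integral_fderiv_segment [CompleteSpace F] {f : E → F}
    (hf : ContDiff ℝ 1 f) (x₀ x₁ : E) :
    f x₁ - f x₀ = ∫ ξ in (0:ℝ)..1, fderiv ℝ f (ξ • x₁ + (1 - ξ) • x₀) (x₁ - x₀) := by
  have hγ (ξ : ℝ) : HasDerivAt (fun t : ℝ => t • x₁ + (1 - t) • x₀) (x₁ - x₀) ξ := by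
    have := ((hasDerivAt_id ξ).smul_const x₁).add (((hasDerivAt_id ξ).const_sub 1).smul_const x₀)
    rwa [one_smul, neg_one_smul, ← sub_eq_add_neg] at this
  have := intervalIntegral.integral_eq_sub_of_hasDerivAt
    (fun t _ => (hf.differentiable one_ne_zero _).hasFDerivAt.comp_hasDerivAt t (hγ t))
    ((hf.continuous_fderiv_segment_apply x₀ x₁ (x₁ - x₀)).intervalIntegrable 0 1)
  simpa using this.symm

end Segment

theorem ContDiff.sub_eq_dotProduct_integral_fderiv {ι : Type*} [Fintype ι] [DecidableEq ι]
    {f : (ι → ℝ) → ℝ} (hf : ContDiff ℝ 1 f) (x₀ x₁ : ι → ℝ) :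
    f x₁ - f x₀ = (x₁ - x₀) ⬝ᵥ fun i =>
      ∫ ξ in (0:ℝ)..1, fderiv ℝ f (ξ • x₁ + (1 - ξ) • x₀) (Pi.single i 1) := by
  have hsum (ξ : ℝ) : fderiv ℝ f (ξ • x₁ + (1 - ξ) • x₀) (x₁ - x₀) =
      ∑ i, (x₁ - x₀) i * fderiv ℝ f (ξ • x₁ + (1 - ξ) • x₀) (Pi.single i 1) := by
    conv_lhs => rw [pi_eq_sum_univ' (x₁ - x₀)]
    simp [map_sum]
  rw [hf.sub_eq_integral_fderiv_segment, dotProduct]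
  simp_rw [hsum]
  rw [intervalIntegral.integral_finsetSum fun i _ =>
    ((hf.continuous_fderiv_segment_apply x₀ x₁ _).const_mul _).intervalIntegrable 0 1]
  simp_rw [intervalIntegral.integral_const_mul]

section PartialDifference

variable {ι F : Type*} [Fintype ι] [DecidableEq ι] [NormedAddCommGroup F] [NormedSpace ℝ F]

theorem ContDiff.sub_eq_dotProduct_integral_partial_fst {H : (ι → ℝ) × F → ℝ}
    (hH : ContDiff ℝ 1 H) (p₀ p₁ : ι → ℝ) (q : F) :
    H (p₁, q) - H (p₀, q) = (p₁ - p₀) ⬝ᵥ fun i =>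
      ∫ ξ in (0:ℝ)..1, fderiv ℝ H (ξ • p₁ + (1 - ξ) • p₀, q) (Pi.single i 1, 0) := by
  have hslice : ContDiff ℝ 1 fun p => H (p, q) := hH.comp (contDiff_id.prodMk contDiff_const)
  rw [hslice.sub_eq_dotProduct_integral_fderiv]
  simp_rw [fderiv_prodMk_left_apply ((hH.differentiable one_ne_zero) _)]

theorem ContDiff.sub_eq_dotProduct_integral_partial_snd {H : F × (ι → ℝ) → ℝ}
    (hH : ContDiff ℝ 1 H) (p : F) (q₀ q₁ : ι → ℝ) :
    H (p, q₁) - H (p, q₀) = (q₁ - q₀) ⬝ᵥ fun i =>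
      ∫ ξ in (0:ℝ)..1, fderiv ℝ H (p, ξ • q₁ + (1 - ξ) • q₀) (0, Pi.single i 1) := by
  have hslice : ContDiff ℝ 1 fun q => H (p, q) := hH.comp (contDiff_const.prodMk contDiff_id)
  rw [hslice.sub_eq_dotProduct_integral_fderiv]
  simp_rw [fderiv_prodMk_right_apply ((hH.differentiable one_ne_zero) _)]

end PartialDifference

theorem pavf_energy_preservation {d : ℕ}
    (H : (Fin d → ℝ) × (Fin d → ℝ) → ℝ) (hH : ContDiff ℝ 1 H)
    (Hp Hq : (Fin d → ℝ) → (Fin d → ℝ) → (Fin d → ℝ))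
    (hHp : ∀ p q i, Hp p q i = fderiv ℝ H (p, q) (Pi.single i 1, 0))
    (hHq : ∀ p q i, Hq p q i = fderiv ℝ H (p, q) (0, Pi.single i 1))
    (S : Matrix ((Fin d) ⊕ (Fin d)) ((Fin d) ⊕ (Fin d)) ℝ)
    (hS : S.transpose = -S)
    (τ : ℝ) (hτ : τ ≠ 0)
    (p0 p1 q0 q1 : Fin d → ℝ)
    (hupdate : ∀ j, τ⁻¹ • (Sum.elim (p1 - p0) (q1 - q0)) j =
      S.mulVec (Sum.elim
        (fun i => ∫ ξ in (0:ℝ)..1, Hp (ξ • p1 + (1 - ξ) • p0) q0 i)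
        (fun i => ∫ ξ in (0:ℝ)..1, Hq p1 (ξ • q1 + (1 - ξ) • q0) i)) j) :
    H (p1, q1) = H (p0, q0) := by
  set v := Sum.elim (fun i => ∫ ξ in (0:ℝ)..1, Hp (ξ • p1 + (1 - ξ) • p0) q0 i)
    (fun i => ∫ ξ in (0:ℝ)..1, Hq p1 (ξ • q1 + (1 - ξ) • q0) i)
  have hp := hH.sub_eq_dotProduct_integral_partial_fst p0 p1 q0
  have hq := hH.sub_eq_dotProduct_integral_partial_snd p1 q0 q1
  simp_rw [← hHp] at hp
  simp_rw [← hHq] at hq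
  have hΔ : Sum.elim (p1 - p0) (q1 - q0) = τ • S *ᵥ v :=
    (inv_smul_eq_iff₀ hτ).1 (funext hupdate)
  have hΔv : Sum.elim (p1 - p0) (q1 - q0) ⬝ᵥ v = 0 := by
    rw [hΔ, smul_dotProduct, dotProduct_comm,
      dotProduct_mulVec_self_eq_zero_of_transpose_eq_neg hS, smul_zero]
  rw [sumElim_dotProduct_sumElim] at hΔv
  linarith
end

section
/- Let H : (ℝ^d)^m → ℝ be continuously differentiable and S a skew-symmetric (md)×(md) real matrix. Suppose z^{n+1} = (z̃₁^{n+1},…,z̃_m^{n+1}) satisfies the general partitioned AVF update: for each group k, the k-th block of (z^{n+1}-z^n)/τ equals the k-th block of S applied to the vector whose k-th block is ∫₀¹ H_{z̃_k}(z̃₁^{n+1},…,z̃_{k-1}^{n+1}, ξz̃_k^{n+1}+(1-ξ)z̃_k^n, z̃_{k+1}^n,…,z̃_m^n) dξ. Then H(z^{n+1}) = H(z^n). -/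
/-! The partitioned AVF integrals form a discrete gradient `∇̄H` of `H`: moving the blocks from
`z⁰` to `z¹` one at a time and applying the fundamental theorem of calculus on each of these
segments telescopes `H z¹ - H z⁰` into `(z¹ - z⁰) ⬝ ∇̄H`. The update says `z¹ - z⁰ = τ S ∇̄H`,
and `S ∇̄H ⬝ ∇̄H = 0` because `S` is skew-symmetric. -/

open MeasureTheory AffineMap Matrix

theorem Matrix.mulVec_dotProduct_self_eq_zero_of_transpose_eq_neg {n R : Type*} [Fintype n]
    [CommRing R] [IsAddTorsionFree R] {S : Matrix n n R} (hS : Sᵀ = -S) (v : n → R) :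
    S *ᵥ v ⬝ᵥ v = 0 :=
  self_eq_neg.1 <| calc
    S *ᵥ v ⬝ᵥ v = v ᵥ* S ⬝ᵥ v := by rw [dotProduct_comm, dotProduct_mulVec]
    _ = -(S *ᵥ v ⬝ᵥ v) := by rw [← mulVec_transpose, hS, neg_mulVec, neg_dotProduct]

section LineIntegral

variable {E F : Type*} [NormedAddCommGroup E] [NormedSpace ℝ E] [NormedAddCommGroup F]
  [NormedSpace ℝ F] {f : E → F}

theorem intervalIntegral_fderiv_lineMap_apply (hf : ContDiff ℝ 1 f) (a b v : E) :
    (∫ t in (0 : ℝ)..1, fderiv ℝ f (lineMap a b t)) v =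
      ∫ t in (0 : ℝ)..1, fderiv ℝ f (lineMap a b t) v :=
  ContinuousLinearMap.intervalIntegral_apply
    (((hf.continuous_fderiv one_ne_zero).comp lineMap_continuous).intervalIntegrable 0 1) v

theorem sub_eq_intervalIntegral_fderiv_lineMap [CompleteSpace F] (hf : ContDiff ℝ 1 f)
    (a b : E) :
    f b - f a = (∫ t in (0 : ℝ)..1, fderiv ℝ f (lineMap a b t)) (b - a) := by
  have hderiv (t : ℝ) : HasDerivAt (f ∘ lineMap a b) (fderiv ℝ f (lineMap a b t) (b - a)) t :=
    (hf.differentiable one_ne_zero _).hasFDerivAt.comp_hasDerivAt t hasDerivAt_lineMap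
  have hcont : Continuous fun t : ℝ => fderiv ℝ f (lineMap a b t) (b - a) :=
    ((hf.continuous_fderiv one_ne_zero).comp lineMap_continuous).clm_apply continuous_const
  rw [intervalIntegral_fderiv_lineMap_apply hf, intervalIntegral.integral_eq_sub_of_hasDerivAt
    (fun t _ => hderiv t) (hcont.intervalIntegrable 0 1)]
  simp

end LineIntegral

theorem map_pi_single_eq_sum_smul {ι κ R M G : Type*} [Fintype κ] [DecidableEq ι] [DecidableEq κ]
    [Semiring R] [AddCommMonoid M] [Module R M] [FunLike G (ι → κ → R) M]
    [LinearMapClass G R (ι → κ → R) M] (L : G) (k : ι) (v : κ → R) :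
    L (Pi.single k v) = ∑ i, v i • L (Pi.single k (Pi.single i 1)) := by
  have hv : Pi.single k v = ∑ i, v i • (Pi.single k (Pi.single i 1) : ι → κ → R) := by
    ext j i
    rcases eq_or_ne j k with rfl | hj
    · simp [Finset.sum_apply, Pi.single_apply]
    · simp [Finset.sum_apply, hj]
  simp [hv, map_sum, map_smul]

section BlockPrefixMix

variable {m : ℕ} {E : Type*}

def blockPrefixMix (x y : Fin m → E) (n : ℕ) : Fin m → E :=
  fun j => if (j : ℕ) < n then y j else x j

variable (x y : Fin m → E)

@[simp]
theorem blockPrefixMix_zero : blockPrefixMix x y 0 = x := by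
  ext j; simp [blockPrefixMix]

@[simp]
theorem blockPrefixMix_self : blockPrefixMix x y m = y := by
  ext j; simp [blockPrefixMix]

theorem sub_eq_sum_sub_blockPrefixMix {G : Type*} [AddCommGroup G] (f : (Fin m → E) → G) :
    f y - f x = ∑ k : Fin m, (f (blockPrefixMix x y (k + 1)) - f (blockPrefixMix x y k)) := by
  rw [Fin.sum_univ_eq_sum_range
      (fun n => f (blockPrefixMix x y (n + 1)) - f (blockPrefixMix x y n)),
    Finset.sum_range_sub (fun n => f (blockPrefixMix x y n)), blockPrefixMix_zero,
    blockPrefixMix_self]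

theorem blockPrefixMix_succ_sub [AddCommGroup E] (k : Fin m) :
    blockPrefixMix x y (k + 1) - blockPrefixMix x y k = Pi.single k (y k - x k) := by
  ext j : 1
  rcases lt_trichotomy j k with hj | rfl | hj
  · simp [blockPrefixMix, hj, hj.ne, Nat.lt_succ_of_lt (Fin.lt_def.1 hj)]
  · simp [blockPrefixMix]
  · have : ¬ (j : ℕ) < k + 1 := by omega
    simp [blockPrefixMix, hj.ne', not_lt.2 hj.le, this]

theorem lineMap_blockPrefixMix {R : Type*} [Ring R] [AddCommGroup E] [Module R E] (k : Fin m)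
    (ξ : R) :
    lineMap (blockPrefixMix x y k) (blockPrefixMix x y (k + 1)) ξ = fun j : Fin m =>
      if (j : ℕ) < k then y j else if j = k then ξ • y k + (1 - ξ) • x k else x j := by
  ext j : 1
  rw [lineMap_apply_module', blockPrefixMix_succ_sub]
  rcases lt_trichotomy j k with hj | rfl | hj
  · simp [blockPrefixMix, hj, hj.ne]
  · simp [blockPrefixMix, smul_sub, sub_smul]; abel
  · simp [blockPrefixMix, hj.ne', not_lt.2 hj.le]

end BlockPrefixMix

noncomputable def partitionedAVFGradient {m d : ℕ} (H : (Fin m → Fin d → ℝ) → ℝ)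
    (x y : Fin m → Fin d → ℝ) (ki : Fin m × Fin d) : ℝ :=
  ∫ ξ in (0 : ℝ)..1,
    fderiv ℝ H (lineMap (blockPrefixMix x y ki.1) (blockPrefixMix x y (ki.1 + 1)) ξ)
      (Pi.single ki.1 (Pi.single ki.2 1))

theorem sub_eq_dotProduct_partitionedAVFGradient {m d : ℕ} {H : (Fin m → Fin d → ℝ) → ℝ}
    (hH : ContDiff ℝ 1 H) (x y : Fin m → Fin d → ℝ) :
    H y - H x = Function.uncurry (y - x) ⬝ᵥ partitionedAVFGradient H x y := by
  rw [sub_eq_sum_sub_blockPrefixMix x y H, dotProduct, Fintype.sum_prod_type]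
  refine Finset.sum_congr rfl fun k _ => ?_
  rw [sub_eq_intervalIntegral_fderiv_lineMap hH, blockPrefixMix_succ_sub,
    map_pi_single_eq_sum_smul]
  refine Finset.sum_congr rfl fun i _ => ?_
  rw [intervalIntegral_fderiv_lineMap_apply hH]
  rfl

theorem general_pavf_energy_preservation {d m : ℕ}
    (H : (Fin m → Fin d → ℝ) → ℝ) (hH : ContDiff ℝ 1 H)
    (Hk : Fin m → (Fin m → Fin d → ℝ) → (Fin d → ℝ))
    (hHk : ∀ k z i, Hk k z i = fderiv ℝ H z (Pi.single k (Pi.single i 1)))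
    (S : Matrix (Fin m × Fin d) (Fin m × Fin d) ℝ)
    (hS : S.transpose = -S)
    (τ : ℝ) (hτ : τ ≠ 0)
    (z0 z1 : Fin m → Fin d → ℝ)
    (hupdate : ∀ k i, (z1 k i - z0 k i) / τ =
      S.mulVec (fun ki => ∫ ξ in (0:ℝ)..1,
        Hk ki.1 (fun j => if (j : ℕ) < (ki.1 : ℕ) then z1 j
          else if j = ki.1 then ξ • z1 ki.1 + (1 - ξ) • z0 ki.1
          else z0 j) ki.2) (k, i)) :
    H z1 = H z0 := by
  have hgrad : (fun ki : Fin m × Fin d => ∫ ξ in (0:ℝ)..1,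
      Hk ki.1 (fun j => if (j : ℕ) < (ki.1 : ℕ) then z1 j
        else if j = ki.1 then ξ • z1 ki.1 + (1 - ξ) • z0 ki.1
        else z0 j) ki.2) = partitionedAVFGradient H z0 z1 := by
    ext ⟨k, i⟩
    simp only [partitionedAVFGradient, lineMap_blockPrefixMix, hHk]
  have hstep : Function.uncurry (z1 - z0) = τ • (S *ᵥ partitionedAVFGradient H z0 z1) := by
    ext ⟨k, i⟩
    rw [Pi.smul_apply, smul_eq_mul, ← hgrad, ← hupdate k i, mul_div_cancel₀ _ hτ]
    rfl
  rw [← sub_eq_zero, sub_eq_dotProduct_partitionedAVFGradient hH, hstep, smul_dotProduct,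
    mulVec_dotProduct_self_eq_zero_of_transpose_eq_neg hS, smul_zero]
end

section
/- For the Hénon-Heiles Hamiltonian H(q₁,q₂,p₁,p₂) = (1/2)(q₁²+q₂²+p₁²+p₂²) + q₁²q₂ - (1/3)q₂³, any solution (q₁^{n+1},q₂^{n+1},p₁^{n+1},p₂^{n+1}) of the PAVF scheme: (q₁^{n+1}-q₁^n)/τ = (p₁^{n+1}+p₁^n)/2, (q₂^{n+1}-q₂^n)/τ = (p₂^{n+1}+p₂^n)/2, (p₁^{n+1}-p₁^n)/τ = -((q₁^{n+1}+q₁^n)/2 + (q₁^{n+1}+q₁^n)q₂^n), (p₂^{n+1}-p₂^n)/τ = -((q₂^{n+1}+q₂^n)/2 + (q₁^{n+1})²) + (1/3)((q₂^{n+1})² + q₂^{n+1}q₂^n + (q₂^n)²), satisfies H(q₁^{n+1},q₂^{n+1},p₁^{n+1},p₂^{n+1}) = H(q₁^n,q₂^n,p₁^n,p₂^n). -/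
theorem henon_heiles_pavf_energy (τ : ℝ) (hτ : τ ≠ 0)
    (q1n q2n p1n p2n q1 q2 p1 p2 : ℝ)
    (h1 : (q1 - q1n) / τ = (p1 + p1n) / 2)
    (h2 : (q2 - q2n) / τ = (p2 + p2n) / 2)
    (h3 : (p1 - p1n) / τ = -((q1 + q1n) / 2 + (q1 + q1n) * q2n))
    (h4 : (p2 - p2n) / τ = -((q2 + q2n) / 2 + q1 ^ 2)
        + (1 / 3) * (q2 ^ 2 + q2 * q2n + q2n ^ 2)) :
    (1 / 2) * (q1 ^ 2 + q2 ^ 2 + p1 ^ 2 + p2 ^ 2) + q1 ^ 2 * q2 - (1 / 3) * q2 ^ 3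
      = (1 / 2) * (q1n ^ 2 + q2n ^ 2 + p1n ^ 2 + p2n ^ 2) + q1n ^ 2 * q2n
        - (1 / 3) * q2n ^ 3 := by
  have e1 : q1 - q1n = τ * ((p1 + p1n) / 2) := by
    field_simp at h1; linarith
  have e2 : q2 - q2n = τ * ((p2 + p2n) / 2) := by
    field_simp at h2; linarith
  have e3 : p1 - p1n = τ * (-((q1 + q1n) / 2 + (q1 + q1n) * q2n)) := by
    field_simp at h3; linarith
  have e4 : p2 - p2n = τ * (-((q2 + q2n) / 2 + q1 ^ 2)
      + (1 / 3) * (q2 ^ 2 + q2 * q2n + q2n ^ 2)) := by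
    field_simp at h4; linarith
  linear_combination ((q1 + q1n) / 2 + (q1 + q1n) * q2n) * e1
    + ((q2 + q2n) / 2 + q1 ^ 2 - (1 / 3) * (q2 ^ 2 + q2 * q2n + q2n ^ 2)) * e2
    + ((p1 + p1n) / 2) * e3 + ((p2 + p2n) / 2) * e4
end

section
/- For the Hénon-Heiles Hamiltonian H(q₁,q₂,p₁,p₂) = (1/2)(q₁²+q₂²+p₁²+p₂²) + q₁²q₂ - (1/3)q₂³, any solution of the AVF scheme: (q₁^{n+1}-q₁^n)/τ = (p₁^{n+1}+p₁^n)/2, (q₂^{n+1}-q₂^n)/τ = (p₂^{n+1}+p₂^n)/2, (p₁^{n+1}-p₁^n)/τ = -((q₁^{n+1}+q₁^n)/2 + (1/3)(q₁^{n+1}q₂^{n+1} + 4q₁^{n+1/2}q₂^{n+1/2} + q₁^n q₂^n)), (p₂^{n+1}-p₂^n)/τ = -(q₂^{n+1}+q₂^n)/2 + (1/3)((q₂^{n+1})² + q₂^{n+1}q₂^n + (q₂^n)² - (q₁^{n+1})² - q₁^{n+1}q₁^n - (q₁^n)²), where q_i^{n+1/2} = (q_i^{n+1}+q_i^n)/2,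 conserves H exactly: H at step n+1 equals H at step n. -/
theorem henon_heiles_avf_energy (τ : ℝ) (hτ : τ ≠ 0)
    (q1n q2n p1n p2n q1 q2 p1 p2 : ℝ)
    (h1 : (q1 - q1n) / τ = (p1 + p1n) / 2)
    (h2 : (q2 - q2n) / τ = (p2 + p2n) / 2)
    (h3 : (p1 - p1n) / τ = -((q1 + q1n) / 2
        + (1 / 3) * (q1 * q2 + 4 * ((q1 + q1n) / 2) * ((q2 + q2n) / 2) + q1n * q2n)))
    (h4 : (p2 - p2n) / τ = -(q2 + q2n) / 2
        + (1 / 3) * (q2 ^ 2 + q2 * q2n + q2n ^ 2 - q1 ^ 2 - q1 * q1n - q1n ^ 2)) :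
    (1 / 2) * (q1 ^ 2 + q2 ^ 2 + p1 ^ 2 + p2 ^ 2) + q1 ^ 2 * q2 - (1 / 3) * q2 ^ 3
      = (1 / 2) * (q1n ^ 2 + q2n ^ 2 + p1n ^ 2 + p2n ^ 2) + q1n ^ 2 * q2n
        - (1 / 3) * q2n ^ 3 := by
  rw [div_eq_iff hτ] at h1 h2 h3 h4
  linear_combination ((p1 + p1n) / 2) * h3 + ((p2 + p2n) / 2) * h4
    - (-((q1 + q1n) / 2 + (1 / 3) * (q1 * q2 + 4 * ((q1 + q1n) / 2) * ((q2 + q2n) / 2) + q1n * q2n))) * h1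
    - (-(q2 + q2n) / 2 + (1 / 3) * (q2 ^ 2 + q2 * q2n + q2n ^ 2 - q1 ^ 2 - q1 * q1n - q1n ^ 2)) * h2
end

section
/- For the Hénon-Heiles Hamiltonian H(q₁,q₂,p₁,p₂) = (1/2)(q₁²+q₂²+p₁²+p₂²) + q₁²q₂ - (1/3)q₂³, any solution of the PAVF-P scheme: (q₁^{n+1}-q₁^n)/τ = (p₁^{n+1}+p₁^n)/2, (q₂^{n+1}-q₂^n)/τ = (p₂^{n+1}+p₂^n)/2, (p₁^{n+1}-p₁^n)/τ = -(1/2)(q₁^{n+1}+q₁^n + (q₁^{n+1}+q₁^n)(q₂^{n+1}+q₂^n)), (p₂^{n+1}-p₂^n)/τ = -(1/2)(q₂^{n+1}+q₂^n + (q₁^{n+1})² + (q₁^n)²) + (1/3)((q₂^{n+1})²+q₂^{n+1}q₂^n+(q₂^n)²), satisfies H(q₁^{n+1},q₂^{n+1},p₁^{n+1},p₂^{n+1}) = H(q₁^n,q₂^n,p₁^n,p₂^n). -/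
theorem henon_heiles_pavf_plus_energy (τ : ℝ) (hτ : τ ≠ 0)
    (q1n q2n p1n p2n q1 q2 p1 p2 : ℝ)
    (h1 : (q1 - q1n) / τ = (p1 + p1n) / 2)
    (h2 : (q2 - q2n) / τ = (p2 + p2n) / 2)
    (h3 : (p1 - p1n) / τ = -(1 / 2) * (q1 + q1n + (q1 + q1n) * (q2 + q2n)))
    (h4 : (p2 - p2n) / τ = -(1 / 2) * (q2 + q2n + q1 ^ 2 + q1n ^ 2)
        + (1 / 3) * (q2 ^ 2 + q2 * q2n + q2n ^ 2)) :
    (1 / 2) * (q1 ^ 2 + q2 ^ 2 + p1 ^ 2 + p2 ^ 2) + q1 ^ 2 * q2 - (1 / 3) * q2 ^ 3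
      = (1 / 2) * (q1n ^ 2 + q2n ^ 2 + p1n ^ 2 + p2n ^ 2) + q1n ^ 2 * q2n
        - (1 / 3) * q2n ^ 3 := by
  have e1 : q1 - q1n = (p1 + p1n) / 2 * τ := (div_eq_iff hτ).mp h1
  have e2 : q2 - q2n = (p2 + p2n) / 2 * τ := (div_eq_iff hτ).mp h2
  have e3 : p1 - p1n = (-(1 / 2) * (q1 + q1n + (q1 + q1n) * (q2 + q2n))) * τ :=
    (div_eq_iff hτ).mp h3
  have e4 : p2 - p2n = (-(1 / 2) * (q2 + q2n + q1 ^ 2 + q1n ^ 2)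
      + (1 / 3) * (q2 ^ 2 + q2 * q2n + q2n ^ 2)) * τ := (div_eq_iff hτ).mp h4
  linear_combination ((p1 + p1n) / 2) * e3
    - (-(1 / 2) * (q1 + q1n + (q1 + q1n) * (q2 + q2n))) * e1
    + ((p2 + p2n) / 2) * e4
    - (-(1 / 2) * (q2 + q2n + q1 ^ 2 + q1n ^ 2)
      + (1 / 3) * (q2 ^ 2 + q2 * q2n + q2n ^ 2)) * e2
end

section
/- Let D be a symmetric (J+1)×(J+1) real matrix and U^n, V^n, P^n, Q^n ∈ ℝ^{J+1} satisfy the PAVF scheme for the semi-discrete Klein-Gordon-Schrödinger system: (P^{n+1}-P^n)/τ = (1/2)D Q^{n+1/2} + U^{n+1} · Q^{n+1/2} and (Q^{n+1}-Q^n)/τ = -(1/2)D P^{n+1/2} - U^{n+1} · P^{n+1/2}, where X^{n+1/2} = (X^{n+1}+X^n)/2 and · is componentwise multiplication. Then the discrete mass is conserved: ‖P^{n+1}‖² + ‖Q^{n+1}‖² = ‖P^n‖² + ‖Q^n‖². -/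
theorem kgs_pavf_mass_conservation {J : ℕ}
    (D : Matrix (Fin (J + 1)) (Fin (J + 1)) ℝ) (hD : D.transpose = D)
    (τ : ℝ) (hτ : τ ≠ 0)
    (U0 V0 P0 Q0 U1 V1 P1 Q1 : Fin (J + 1) → ℝ)
    (hP : ∀ i, (P1 i - P0 i) / τ =
      (1 / 2) * D.mulVec (fun j => (Q1 j + Q0 j) / 2) i
        + U1 i * ((Q1 i + Q0 i) / 2))
    (hQ : ∀ i, (Q1 i - Q0 i) / τ =
      -(1 / 2) * D.mulVec (fun j => (P1 j + P0 j) / 2) i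
        - U1 i * ((P1 i + P0 i) / 2)) :
    (∑ i, P1 i ^ 2) + (∑ i, Q1 i ^ 2) = (∑ i, P0 i ^ 2) + (∑ i, Q0 i ^ 2) := by
  have hsym : ∀ x y : Fin (J + 1) → ℝ,
      ∑ i, x i * D.mulVec y i = ∑ i, y i * D.mulVec x i := by
    intro x y
    simp only [Matrix.mulVec, dotProduct, Finset.mul_sum]
    rw [Finset.sum_comm]
    refine Finset.sum_congr rfl fun j _ => Finset.sum_congr rfl fun i _ => ?_
    have h : D i j = D j i := by
      have := congrFun (congrFun hD j) i
      simpa [Matrix.transpose_apply] using this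
    rw [h]; ring
  have h1 : ∀ i, P1 i ^ 2 + Q1 i ^ 2 - P0 i ^ 2 - Q0 i ^ 2 =
      (τ / 4) * ((P1 i + P0 i) * D.mulVec (fun j => Q1 j + Q0 j) i
        - (Q1 i + Q0 i) * D.mulVec (fun j => P1 j + P0 j) i) := by
    intro i
    have hDq : D.mulVec (fun j => (Q1 j + Q0 j) / 2) i
        = D.mulVec (fun j => Q1 j + Q0 j) i / 2 := by
      simp [Matrix.mulVec, dotProduct, Finset.sum_div, mul_div_assoc]
    have hDp : D.mulVec (fun j => (P1 j + P0 j) / 2) i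
        = D.mulVec (fun j => P1 j + P0 j) i / 2 := by
      simp [Matrix.mulVec, dotProduct, Finset.sum_div, mul_div_assoc]
    have hp := hP i; have hq := hQ i
    rw [div_eq_iff hτ] at hp hq
    rw [hDq] at hp; rw [hDp] at hq
    linear_combination (P1 i + P0 i) * hp + (Q1 i + Q0 i) * hq
  have hz : ∑ i, (P1 i ^ 2 + Q1 i ^ 2 - P0 i ^ 2 - Q0 i ^ 2) = 0 := by
    simp_rw [h1]
    rw [← Finset.mul_sum, Finset.sum_sub_distrib,
      hsym (fun i => P1 i + P0 i) (fun i => Q1 i + Q0 i)]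
    ring
  have hsum : ∑ i, (P1 i ^ 2 + Q1 i ^ 2 - P0 i ^ 2 - Q0 i ^ 2)
      = (∑ i, P1 i ^ 2) + (∑ i, Q1 i ^ 2) - (∑ i, P0 i ^ 2) - (∑ i, Q0 i ^ 2) := by
    simp [Finset.sum_sub_distrib, Finset.sum_add_distrib]
  rw [hsum] at hz
  linarith
end

section
/- Let D be a symmetric (J+1)×(J+1) real matrix. Suppose U^n,V^n,P^n,Q^n ∈ ℝ^{J+1} satisfy the full PAVF scheme for the semi-discrete KGS system: (U^{n+1}-U^n)/τ = V^n + V^{n+1}; (V^{n+1}-V^n)/τ = (1/2)(D U^{n+1/2} - U^{n+1/2} + (P^n)² + (Q^n)²); (P^{n+1}-P^n)/τ = (1/2)D Q^{n+1/2} + U^{n+1}·Q^{n+1/2}; (Q^{n+1}-Q^n)/τ = -(1/2)D P^{n+1/2} - U^{n+1}·P^{n+1/2}. Then the discrete energy H(U,V,P,Q) = (1/4)(-PᵀDP - QᵀDQ - UᵀDU + UᵀU + 4VᵀV - 2Σ_j u_j(p_j²+q_j²)) is conserved: H(U^{n+1},V^{n+1},P^{n+1},Q^{n+1}) = H(U^n,V^n,P^n,Q^n).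 -/
theorem kgs_pavf_energy_conservation {J : ℕ}
    (D : Matrix (Fin (J + 1)) (Fin (J + 1)) ℝ) (hD : D.transpose = D)
    (τ : ℝ) (hτ : τ ≠ 0)
    (H : (Fin (J + 1) → ℝ) → (Fin (J + 1) → ℝ) → (Fin (J + 1) → ℝ) →
      (Fin (J + 1) → ℝ) → ℝ)
    (hH : ∀ U V P Q, H U V P Q = (1 / 4) *
      (-(∑ i, P i * D.mulVec P i) - (∑ i, Q i * D.mulVec Q i)
        - (∑ i, U i * D.mulVec U i) + (∑ i, U i * U i) + 4 * (∑ i, V i * V i)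
        - 2 * ∑ i, U i * (P i ^ 2 + Q i ^ 2)))
    (U0 V0 P0 Q0 U1 V1 P1 Q1 : Fin (J + 1) → ℝ)
    (hU : ∀ i, (U1 i - U0 i) / τ = V0 i + V1 i)
    (hV : ∀ i, (V1 i - V0 i) / τ =
      (1 / 2) * (D.mulVec (fun j => (U1 j + U0 j) / 2) i - (U1 i + U0 i) / 2
        + P0 i ^ 2 + Q0 i ^ 2))
    (hP : ∀ i, (P1 i - P0 i) / τ =
      (1 / 2) * D.mulVec (fun j => (Q1 j + Q0 j) / 2) i
        + U1 i * ((Q1 i + Q0 i) / 2))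
    (hQ : ∀ i, (Q1 i - Q0 i) / τ =
      -(1 / 2) * D.mulVec (fun j => (P1 j + P0 j) / 2) i
        - U1 i * ((P1 i + P0 i) / 2)) :
    H U1 V1 P1 Q1 = H U0 V0 P0 Q0 := by
  -- symmetry of D as an identity on entries
  have hDij : ∀ i j, D i j = D j i := fun i j =>
    congrFun (congrFun hD j) i
  -- cross lemma: ∑ X (D Y) = ∑ Y (D X)
  have cross : ∀ X Y : Fin (J + 1) → ℝ,
      (∑ i, X i * D.mulVec Y i) = ∑ i, Y i * D.mulVec X i := by
    intro X Y
    simp only [Matrix.mulVec, dotProduct, Finset.mul_sum]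
    rw [Finset.sum_comm]
    refine Finset.sum_congr rfl fun i _ => Finset.sum_congr rfl fun j _ => ?_
    rw [hDij j i]; ring
  -- mulVec of an average
  have avg : ∀ (A B : Fin (J + 1) → ℝ) i,
      D.mulVec (fun j => (A j + B j) / 2) i
        = (D.mulVec A i + D.mulVec B i) / 2 := by
    intro A B i
    simp only [Matrix.mulVec, dotProduct]
    rw [← Finset.sum_add_distrib, Finset.sum_div]
    exact Finset.sum_congr rfl fun j _ => by ring
  -- cleared hypotheses
  have hU' : ∀ i, U1 i - U0 i = τ * (V0 i + V1 i) := fun i => by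
    have h := hU i; field_simp at h; linarith
  have hV' : ∀ i, V1 i - V0 i =
      τ * ((1 / 2) * ((D.mulVec U1 i + D.mulVec U0 i) / 2 - (U1 i + U0 i) / 2
        + P0 i ^ 2 + Q0 i ^ 2)) := fun i => by
    have h := hV i
    rw [avg U1 U0 i] at h
    field_simp at h; linarith
  have hP' : ∀ i, P1 i - P0 i =
      τ * ((1 / 2) * ((D.mulVec Q1 i + D.mulVec Q0 i) / 2)
        + U1 i * ((Q1 i + Q0 i) / 2)) := fun i => by
    have h := hP i
    rw [avg Q1 Q0 i] at h
    field_simp at h; linarith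
  have hQ' : ∀ i, Q1 i - Q0 i =
      τ * (-(1 / 2) * ((D.mulVec P1 i + D.mulVec P0 i) / 2)
        - U1 i * ((P1 i + P0 i) / 2)) := fun i => by
    have h := hQ i
    rw [avg P1 P0 i] at h
    field_simp at h; linarith
  -- pointwise key identity
  have key : ∀ i,
      (P1 i - P0 i) * (D.mulVec P1 i + D.mulVec P0 i)
      + (Q1 i - Q0 i) * (D.mulVec Q1 i + D.mulVec Q0 i)
      + (U1 i - U0 i) * (D.mulVec U1 i + D.mulVec U0 i)
      - (U1 i - U0 i) * (U1 i + U0 i)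
      - 4 * ((V1 i - V0 i) * (V1 i + V0 i))
      + 2 * (U1 i * (P1 i ^ 2 + Q1 i ^ 2) - U0 i * (P0 i ^ 2 + Q0 i ^ 2))
      = 0 := by
    intro i
    linear_combination
      ((D.mulVec P1 i + D.mulVec P0 i) + 2 * U1 i * (P1 i + P0 i)) * hP' i
      + ((D.mulVec Q1 i + D.mulVec Q0 i) + 2 * U1 i * (Q1 i + Q0 i)) * hQ' i
      + ((D.mulVec U1 i + D.mulVec U0 i) - (U1 i + U0 i)
          + 2 * (P0 i ^ 2 + Q0 i ^ 2)) * hU' i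
      - 4 * (V1 i + V0 i) * hV' i
  -- sum of the key identity
  have main : (∑ i, (P1 i - P0 i) * (D.mulVec P1 i + D.mulVec P0 i))
      + (∑ i, (Q1 i - Q0 i) * (D.mulVec Q1 i + D.mulVec Q0 i))
      + (∑ i, (U1 i - U0 i) * (D.mulVec U1 i + D.mulVec U0 i))
      - (∑ i, (U1 i - U0 i) * (U1 i + U0 i))
      - 4 * (∑ i, (V1 i - V0 i) * (V1 i + V0 i))
      + 2 * (∑ i, (U1 i * (P1 i ^ 2 + Q1 i ^ 2) - U0 i * (P0 i ^ 2 + Q0 i ^ 2)))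
      = 0 := by
    have h := Finset.sum_eq_zero (s := (Finset.univ : Finset (Fin (J + 1))))
      (fun i _ => key i)
    simp only [Finset.sum_add_distrib, Finset.sum_sub_distrib,
      ← Finset.mul_sum] at h
    rw [← Finset.sum_sub_distrib] at h
    linarith [h]
  -- difference identities for each quadratic piece
  have eP : (∑ i, P1 i * D.mulVec P1 i) - (∑ i, P0 i * D.mulVec P0 i)
      = ∑ i, (P1 i - P0 i) * (D.mulVec P1 i + D.mulVec P0 i) := by
    rw [← Finset.sum_sub_distrib]
    have h := cross P1 P0
    calc (∑ i, (P1 i * D.mulVec P1 i - P0 i * D.mulVec P0 i))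
        = (∑ i, ((P1 i - P0 i) * (D.mulVec P1 i + D.mulVec P0 i)
            - P1 i * D.mulVec P0 i + P0 i * D.mulVec P1 i)) := by
          exact Finset.sum_congr rfl fun i _ => by ring
      _ = _ := by
          simp only [Finset.sum_add_distrib, Finset.sum_sub_distrib]
          rw [h]; ring
  have eQ : (∑ i, Q1 i * D.mulVec Q1 i) - (∑ i, Q0 i * D.mulVec Q0 i)
      = ∑ i, (Q1 i - Q0 i) * (D.mulVec Q1 i + D.mulVec Q0 i) := by
    rw [← Finset.sum_sub_distrib]
    have h := cross Q1 Q0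
    calc (∑ i, (Q1 i * D.mulVec Q1 i - Q0 i * D.mulVec Q0 i))
        = (∑ i, ((Q1 i - Q0 i) * (D.mulVec Q1 i + D.mulVec Q0 i)
            - Q1 i * D.mulVec Q0 i + Q0 i * D.mulVec Q1 i)) := by
          exact Finset.sum_congr rfl fun i _ => by ring
      _ = _ := by
          simp only [Finset.sum_add_distrib, Finset.sum_sub_distrib]
          rw [h]; ring
  have eU : (∑ i, U1 i * D.mulVec U1 i) - (∑ i, U0 i * D.mulVec U0 i)
      = ∑ i, (U1 i - U0 i) * (D.mulVec U1 i + D.mulVec U0 i) := by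
    rw [← Finset.sum_sub_distrib]
    have h := cross U1 U0
    calc (∑ i, (U1 i * D.mulVec U1 i - U0 i * D.mulVec U0 i))
        = (∑ i, ((U1 i - U0 i) * (D.mulVec U1 i + D.mulVec U0 i)
            - U1 i * D.mulVec U0 i + U0 i * D.mulVec U1 i)) := by
          exact Finset.sum_congr rfl fun i _ => by ring
      _ = _ := by
          simp only [Finset.sum_add_distrib, Finset.sum_sub_distrib]
          rw [h]; ring
  have eUU : (∑ i, U1 i * U1 i) - (∑ i, U0 i * U0 i)
      = ∑ i, (U1 i - U0 i) * (U1 i + U0 i) := by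
    rw [← Finset.sum_sub_distrib]
    exact Finset.sum_congr rfl fun i _ => by ring
  have eVV : (∑ i, V1 i * V1 i) - (∑ i, V0 i * V0 i)
      = ∑ i, (V1 i - V0 i) * (V1 i + V0 i) := by
    rw [← Finset.sum_sub_distrib]
    exact Finset.sum_congr rfl fun i _ => by ring
  have eN : (∑ i, U1 i * (P1 i ^ 2 + Q1 i ^ 2))
      - (∑ i, U0 i * (P0 i ^ 2 + Q0 i ^ 2))
      = ∑ i, (U1 i * (P1 i ^ 2 + Q1 i ^ 2) - U0 i * (P0 i ^ 2 + Q0 i ^ 2)) := by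
    rw [← Finset.sum_sub_distrib]
  rw [hH, hH]
  rw [← eP, ← eQ, ← eU, ← eUU, ← eVV, ← eN] at main
  linarith [main]
end

section
/- Let D be a symmetric (J+1)×(J+1) real matrix. Any solution of the semi-discrete KGS ODE system U' = 2V, V' = (1/2)(DU - U + P² + Q²), P' = (1/2)DQ + U·Q, Q' = -(1/2)DP - U·P conserves the discrete energy H(U,V,P,Q) = (1/4)(-PᵀDP - QᵀDQ - UᵀDU + UᵀU + 4VᵀV - 2Σ_j u_j(p_j² + q_j²)): dH/dt = 0 along solutions. -/
/-!
The semi-discrete KGS system is Hamiltonian: with `H` the discrete energy, it reads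
`U' = ∂H/∂V`, `V' = -∂H/∂U`, `P' = -∂H/∂Q`, `Q' = ∂H/∂P`. By the chain rule, `dH/dt` is the
sum of the four partial gradients paired with these velocities, and the pairings cancel two by
two. The symmetry of `D` is what makes `∂(pᵀDp)/∂p = 2Dp`.
-/

open Matrix

noncomputable section

variable {n : Type*} [Fintype n] {t : ℝ}

theorem Matrix.IsSymm.dotProduct_mulVec_comm {R : Type*} [CommSemiring R] {A : Matrix n n R}
    (hA : A.IsSymm) (v w : n → R) : v ⬝ᵥ A *ᵥ w = w ⬝ᵥ A *ᵥ v := by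
  rw [dotProduct_mulVec, ← mulVec_transpose, hA, dotProduct_comm]

theorem HasDerivAt.dotProduct {u v : ℝ → n → ℝ} {u' v' : n → ℝ}
    (hu : HasDerivAt u u' t) (hv : HasDerivAt v v' t) :
    HasDerivAt (fun s => u s ⬝ᵥ v s) (u' ⬝ᵥ v t + u t ⬝ᵥ v') t := by
  simp only [_root_.dotProduct, ← Finset.sum_add_distrib]
  exact HasDerivAt.fun_sum fun i _ => (hasDerivAt_pi.mp hu i).mul (hasDerivAt_pi.mp hv i)

theorem HasDerivAt.mulVec {m : Type*} [Fintype m] (A : Matrix m n ℝ) {u : ℝ → n → ℝ}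
    {u' : n → ℝ} (hu : HasDerivAt u u' t) : HasDerivAt (fun s => A *ᵥ u s) (A *ᵥ u') t :=
  (A.mulVecLin.toContinuousLinearMap.hasFDerivAt (x := u t)).comp_hasDerivAt t hu

theorem HasDerivAt.dotProduct_mulVec_self {A : Matrix n n ℝ} (hA : A.IsSymm)
    {u : ℝ → n → ℝ} {u' : n → ℝ} (hu : HasDerivAt u u' t) :
    HasDerivAt (fun s => u s ⬝ᵥ A *ᵥ u s) (2 * (u' ⬝ᵥ A *ᵥ u t)) t := by
  convert hu.dotProduct (hu.mulVec A) using 1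
  rw [hA.dotProduct_mulVec_comm (u t)]
  ring

def kgsEnergy (D : Matrix n n ℝ) (u v p q : n → ℝ) : ℝ :=
  (1 / 4) * (-(p ⬝ᵥ D *ᵥ p) - q ⬝ᵥ D *ᵥ q - u ⬝ᵥ D *ᵥ u + u ⬝ᵥ u + 4 * (v ⬝ᵥ v)
    - 2 * u ⬝ᵥ (p ^ 2 + q ^ 2))

def kgsEnergyGradU (D : Matrix n n ℝ) (u p q : n → ℝ) : n → ℝ :=
  (1 / 2 : ℝ) • (u - D *ᵥ u - (p ^ 2 + q ^ 2))

def kgsEnergyGradV (v : n → ℝ) : n → ℝ := (2 : ℝ) • v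

def kgsEnergyGradPQ (D : Matrix n n ℝ) (u w : n → ℝ) : n → ℝ :=
  -((1 / 2 : ℝ) • D *ᵥ w + u * w)

variable {D : Matrix n n ℝ} {u v p q : ℝ → n → ℝ} {u' v' p' q' : n → ℝ}

theorem HasDerivAt.kgsEnergy (hD : D.IsSymm) (hu : HasDerivAt u u' t) (hv : HasDerivAt v v' t)
    (hp : HasDerivAt p p' t) (hq : HasDerivAt q q' t) :
    HasDerivAt (fun s => kgsEnergy D (u s) (v s) (p s) (q s))
      (kgsEnergyGradU D (u t) (p t) (q t) ⬝ᵥ u' + kgsEnergyGradV (v t) ⬝ᵥ v'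
        + kgsEnergyGradPQ D (u t) (p t) ⬝ᵥ p' + kgsEnergyGradPQ D (u t) (q t) ⬝ᵥ q') t := by
  have hquad := (((hp.dotProduct_mulVec_self hD).neg.sub (hq.dotProduct_mulVec_self hD)).sub
    (hu.dotProduct_mulVec_self hD)).add (hu.dotProduct hu)
  have hcubic := hu.dotProduct ((hp.pow 2).add (hq.pow 2))
  refine (((hquad.add ((hv.dotProduct hv).const_mul 4)).sub (hcubic.const_mul 2)).const_mul
    (1 / 4 : ℝ)).congr_deriv ?_
  simp only [kgsEnergyGradU, kgsEnergyGradV, kgsEnergyGradPQ, _root_.dotProduct, Finset.mul_sum,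
    ← Finset.sum_add_distrib, ← Finset.sum_sub_distrib, ← Finset.sum_neg_distrib]
  refine Finset.sum_congr rfl fun i _ => ?_
  simp only [Pi.add_apply, Pi.sub_apply, Pi.smul_apply, Pi.mul_apply, Pi.neg_apply, Pi.pow_apply,
    Pi.natCast_apply, smul_eq_mul]
  ring

/-- Written as `Z' = S ∇H(Z)` with `S` skew-symmetric, so `∇H ⬝ᵥ Z' = ∇Hᵀ S ∇H = 0`. -/
theorem hasDerivAt_kgsEnergy_eq_zero (hD : D.IsSymm)
    (hu : HasDerivAt u (kgsEnergyGradV (v t)) t)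
    (hv : HasDerivAt v (-kgsEnergyGradU D (u t) (p t) (q t)) t)
    (hp : HasDerivAt p (-kgsEnergyGradPQ D (u t) (q t)) t)
    (hq : HasDerivAt q (kgsEnergyGradPQ D (u t) (p t)) t) :
    HasDerivAt (fun s => kgsEnergy D (u s) (v s) (p s) (q s)) 0 t := by
  convert hu.kgsEnergy hD hv hp hq using 1
  rw [dotProduct_neg, dotProduct_neg, dotProduct_comm (kgsEnergyGradV _),
    dotProduct_comm (kgsEnergyGradPQ D _ (q t))]
  ring

end

theorem kgs_semidiscrete_energy_conservation {J : ℕ}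
    (D : Matrix (Fin (J + 1)) (Fin (J + 1)) ℝ) (hD : D.transpose = D)
    (U V P Q : ℝ → Fin (J + 1) → ℝ)
    (hU : ∀ t, HasDerivAt U (fun i => 2 * V t i) t)
    (hV : ∀ t, HasDerivAt V (fun i =>
      (1 / 2) * (D.mulVec (U t) i - U t i + P t i ^ 2 + Q t i ^ 2)) t)
    (hP : ∀ t, HasDerivAt P (fun i =>
      (1 / 2) * D.mulVec (Q t) i + U t i * Q t i) t)
    (hQ : ∀ t, HasDerivAt Q (fun i =>
      -(1 / 2) * D.mulVec (P t) i - U t i * P t i) t) :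
    ∀ t : ℝ, HasDerivAt (fun s => (1 / 4) *
      (-(∑ i, P s i * D.mulVec (P s) i) - (∑ i, Q s i * D.mulVec (Q s) i)
        - (∑ i, U s i * D.mulVec (U s) i) + (∑ i, U s i * U s i)
        + 4 * (∑ i, V s i * V s i)
        - 2 * ∑ i, U s i * (P s i ^ 2 + Q s i ^ 2))) 0 t := by
  intro t
  refine hasDerivAt_kgsEnergy_eq_zero hD (hU t) ((hV t).congr_deriv ?_)
    ((hP t).congr_deriv ?_) ((hQ t).congr_deriv ?_) <;>
  · ext i
    simp only [kgsEnergyGradU, kgsEnergyGradPQ, Pi.add_apply, Pi.sub_apply, Pi.smul_apply,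
      Pi.mul_apply, Pi.neg_apply, Pi.pow_apply, smul_eq_mul]
    ring
end
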